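/- arXiv:1811.12294 — 2 statements merged into one kernel-verified Lean document; each statement's English description precedes it below -/
import Mathlib

section
/- Let C be a category with pullbacks and let L ⊣ R be an adjunction of endofunctors L, R : C → C with unit η : Id → R ∘ L. Then for every object X, the unit component η_X : X → R(L X) is R-precise. -/
open CategoryTheory CategoryTheory.Limits

universe v u

variable {C : Type u} [Category.{v} C]

/-- A morphism `s : S ⟶ R.obj R'` is `R`-precise if whenever `R h ∘ f = R g ∘ s`
there is a diagonal `d : R' ⟶ A` with `R d ∘ s = f` and `h ∘ d = g`. -/
def Precise (R : C ⥤ C) {S R' : C} (s : S ⟶ R.obj R') : Prop :=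
  ∀ {A D : C} (f : S ⟶ R.obj A) (g : R' ⟶ D) (h : A ⟶ D),
    f ≫ R.map h = s ≫ R.map g → ∃ d : R' ⟶ A, s ≫ R.map d = f ∧ d ≫ h = g

/- The diagonal is the adjoint transpose `d` of `f`. Transposition is a bijection, natural in
the codomain, so `d ≫ h` and `g` agree because their transposes are `f ≫ R h = η ≫ R g`. -/
theorem unit_precise_general (L R : C ⥤ C) (adj : L ⊣ R) (X : C) :
    Precise R (show X ⟶ R.obj (L.obj X) from adj.unit.app X) := by
  intro A D f g h hfg
  refine ⟨(adj.homEquiv X A).symm f, ?_, ?_⟩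
  · rw [← adj.homEquiv_unit, Equiv.apply_symm_apply]
  · apply (adj.homEquiv X D).injective
    rw [adj.homEquiv_naturality_right, Equiv.apply_symm_apply, hfg, adj.homEquiv_unit]

/-- For an adjunction `L ⊣ R` of endofunctors on a category with pullbacks,
every component of the unit `η_X : X ⟶ R (L X)` is `R`-precise. -/
theorem unit_precise [HasPullbacks C] (L R : C ⥤ C) (adj : L ⊣ R) (X : C) :
    Precise R (show X ⟶ R.obj (L.obj X) from adj.unit.app X) :=
  unit_precise_general L R adj X
end

section
/- Let C be a category with pullbacks, let L ⊣ R be an adjunction of endofunctors L, R : C → C, and let S be a class of objects of C closed under isomorphism. Then R admits precise factorizations w.r.t. S if and only if L preserves S-objects, i.e. X ∈ S implies L X ∈ S. -/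
/-!
The unit `η_X : X ⟶ R (L X)` is always `R`-precise, so when `L` preserves `S` it is itself the
required factorization of any `f : X ⟶ R Y`, through the transpose `L X ⟶ Y` of `f`.
Conversely, factor `η_X = f' ≫ R h` with `f'` precise and `h : Y' ⟶ L X`, `Y' ∈ S`. The transpose
`k` of `f'` satisfies `k ≫ h = 𝟙`, so `h ≫ k` is idempotent and fixed by `f'`; precision then gives
it a left inverse, forcing `h ≫ k = 𝟙` and `L X ≅ Y'`.
-/

open CategoryTheory CategoryTheory.Limits

universe v u

variable {C : Type u} [Category.{v} C]

/-- `R` admits precise factorizations w.r.t. a class `S` of objects. -/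
def AdmitsPreciseFact (R : C ⥤ C) (S : Set C) : Prop :=
  ∀ {X Y : C} (f : X ⟶ R.obj Y), X ∈ S →
    ∃ (Y' : C) (h : Y' ⟶ Y) (f' : X ⟶ R.obj Y'),
      Y' ∈ S ∧ Precise R f' ∧ f' ≫ R.map h = f

theorem Precise.eq_id_of_idempotent {R : C ⥤ C} {S R' : C} {s : S ⟶ R.obj R'}
    (hs : Precise R s) {e : R' ⟶ R'} (he : e ≫ e = e) (hse : s ≫ R.map e = s) : e = 𝟙 R' := by
  obtain ⟨d, -, hd⟩ := hs s (𝟙 R') e (by simpa using hse)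
  calc e = (d ≫ e) ≫ e := by rw [hd, Category.id_comp]
    _ = 𝟙 R' := by rw [Category.assoc, he, hd]

namespace CategoryTheory.Adjunction

variable {L R : C ⥤ C} (adj : L ⊣ R)

theorem precise_unit (X : C) : Precise R (adj.unit.app X) := by
  intro A D f g h heq
  refine ⟨L.map f ≫ adj.counit.app A, (adj.unit_comp_map_eq_iff _ _).2 rfl, ?_⟩
  simpa using (adj.eq_unit_comp_map_iff g _).1 heq

theorem isIso_of_precise_comp_map_eq_unit {X Y' : C} {f' : X ⟶ R.obj Y'} (hf' : Precise R f')
    {h : Y' ⟶ L.obj X} (hfac : f' ≫ R.map h = adj.unit.app X) : IsIso h := by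
  set k := L.map f' ≫ adj.counit.app Y'
  have hk : adj.unit.app X ≫ R.map k = f' := (adj.unit_comp_map_eq_iff _ _).2 rfl
  have hkh : k ≫ h = 𝟙 (L.obj X) := by
    calc k ≫ h = L.map (f' ≫ R.map h) ≫ adj.counit.app (L.obj X) := by simp [k]
      _ = 𝟙 (L.obj X) := by simp [hfac]
  have hhk : h ≫ k = 𝟙 Y' := by
    refine hf'.eq_id_of_idempotent ?_ ?_
    · rw [Category.assoc, reassoc_of% hkh]
    · rw [R.map_comp, reassoc_of% hfac, hk]
  exact ⟨k, hhk, hkh⟩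

end CategoryTheory.Adjunction

theorem rightAdjoint_admitsPreciseFact_iff_general
    (L R : C ⥤ C) (adj : L ⊣ R) (S : Set C)
    (hiso : ∀ {X Y : C}, X ∈ S → (X ≅ Y) → Y ∈ S) :
    AdmitsPreciseFact R S ↔ ∀ X ∈ S, L.obj X ∈ S := by
  constructor
  · intro hfact X hX
    obtain ⟨Y', h, f', hY', hf', hfac⟩ := hfact (adj.unit.app X) hX
    have := adj.isIso_of_precise_comp_map_eq_unit hf' hfac
    exact hiso hY' (asIso h)
  · intro hL X Y f hX
    exact ⟨L.obj X, L.map f ≫ adj.counit.app Y, adj.unit.app X, hL X hX, adj.precise_unit X,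
      (adj.unit_comp_map_eq_iff _ _).2 rfl⟩

/-- For an adjunction `L ⊣ R` of endofunctors on a category with pullbacks,
`R` admits precise factorizations w.r.t. `S` iff `L` preserves `S`-objects. -/
theorem rightAdjoint_admitsPreciseFact_iff [HasPullbacks C]
    (L R : C ⥤ C) (adj : L ⊣ R) (S : Set C)
    (hiso : ∀ {X Y : C}, X ∈ S → (X ≅ Y) → Y ∈ S) :
    AdmitsPreciseFact R S ↔ ∀ X ∈ S, L.obj X ∈ S :=
  rightAdjoint_admitsPreciseFact_iff_general L R adj S hiso
end
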